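/- arXiv:math/0403081 — 2 statements merged into one kernel-verified Lean document; each statement's English description precedes it below -/
import Mathlib

section
/- In any recollement situation, the intermediate extension functor j_!* := Im(N: j_! → j_*) satisfies i* ∘ j_!* = 0 and i^! ∘ j_!* = 0. -/
/-!
Since `j^* i_* = 0`, adjunction kills every morphism `j_! X ⟶ i_* Y` and `i_* Y ⟶ j_* X`. The
triangle identities then give `i^* j_! = 0` (the unit at `j_! X` vanishes) and `i^! j_* = 0` (the
counit at `j_* X` vanishes). As a left adjoint `i^*` preserves the epimorphism `j_! X ↠ j_!* X`,
and as a right adjoint `i^!` preserves the monomorphism `j_!* X ↪ j_* X`, so both vanish on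
`j_!* X`.
-/

open CategoryTheory Limits

universe v u v' u' v'' u''

/-- A recollement situation of abelian categories `A'`, `A`, `A''`. -/
structure Recollement (A' : Type u') (A : Type u) (A'' : Type u'')
    [Category.{v'} A'] [Category.{v} A] [Category.{v''} A'']
    [Abelian A'] [Abelian A] [Abelian A''] where
  /-- the functor `i^* : A → A'` -/
  iStar : A ⥤ A'
  /-- the functor `i_* : A' → A` -/
  iLower : A' ⥤ A
  /-- the functor `i^! : A → A'` -/
  iShriek : A ⥤ A'
  /-- the functor `j_! : A'' → A` -/
  jShriek : A'' ⥤ A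
  /-- the functor `j^* : A → A''` -/
  jStar : A ⥤ A''
  /-- the functor `j_* : A'' → A` -/
  jLower : A'' ⥤ A
  iStar_additive : iStar.Additive
  iLower_additive : iLower.Additive
  iShriek_additive : iShriek.Additive
  jShriek_additive : jShriek.Additive
  jStar_additive : jStar.Additive
  jLower_additive : jLower.Additive
  /-- `j_!` is left adjoint to `j^*` -/
  adj₁ : jShriek ⊣ jStar
  /-- `j^*` is left adjoint to `j_*` -/
  adj₂ : jStar ⊣ jLower
  /-- `i^*` is left adjoint to `i_*` -/
  adj₃ : iStar ⊣ iLower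
  /-- `i_*` is left adjoint to `i^!` -/
  adj₄ : iLower ⊣ iShriek
  /-- the unit `Id → j^* j_!` is an isomorphism -/
  isIso_adj₁_unit : IsIso adj₁.unit
  /-- the counit `j^* j_* → Id` is an isomorphism -/
  isIso_adj₂_counit : IsIso adj₂.counit
  /-- the counit `i^* i_* → Id` is an isomorphism -/
  isIso_adj₃_counit : IsIso adj₃.counit
  /-- the unit `Id → i^! i_*` is an isomorphism -/
  isIso_adj₄_unit : IsIso adj₄.unit
  iLower_full : iLower.Full
  iLower_faithful : iLower.Faithful
  /-- `i_*` is an embedding onto the full subcategory of objects killed by `j^*` -/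
  essImage_iLower : ∀ (X : A), iLower.essImage X ↔ IsZero (jStar.obj X)

attribute [instance] Recollement.iStar_additive Recollement.iLower_additive
  Recollement.iShriek_additive Recollement.jShriek_additive Recollement.jStar_additive
  Recollement.jLower_additive Recollement.isIso_adj₁_unit Recollement.isIso_adj₂_counit
  Recollement.isIso_adj₃_counit Recollement.isIso_adj₄_unit
  Recollement.iLower_full Recollement.iLower_faithful

variable {A' : Type u'} {A : Type u} {A'' : Type u''}
    [Category.{v'} A'] [Category.{v} A] [Category.{v''} A'']
    [Abelian A'] [Abelian A] [Abelian A'']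

namespace Recollement

/-- The norm `N : j_! ⟶ j_*`, whose component at `X` corresponds to the identity of `X`
under `Hom(j_!X, j_*X) ≅ Hom(X, j^*j_*X) ≅ Hom(X, X)`. -/
noncomputable def norm (R : Recollement A' A A'') : R.jShriek ⟶ R.jLower where
  app X := (R.adj₁.homEquiv X (R.jLower.obj X)).symm (inv (R.adj₂.counit.app X))
  naturality {X Y} f := by
    try dsimp only
    have h : f ≫ inv (R.adj₂.counit.app Y) =
        inv (R.adj₂.counit.app X) ≫ R.jStar.map (R.jLower.map f) := by
      rw [← cancel_mono (R.adj₂.counit.app Y)]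
      have := R.adj₂.counit.naturality f
      simp only [Functor.comp_map, Functor.id_map] at this
      simp [this]
    rw [← Adjunction.homEquiv_naturality_left_symm, h,
      Adjunction.homEquiv_naturality_right_symm]

/-- The intermediate extension `j_!* := Im (N : j_! → j_*)`. -/
noncomputable def jMid (R : Recollement A' A A'') : A'' ⥤ A where
  obj X := image (R.norm.app X)
  map {X Y} f := image.map
    ((Arrow.homMk _ _ (R.norm.naturality f) :
      Arrow.mk (R.norm.app X) ⟶ Arrow.mk (R.norm.app Y)))
  map_id X := by
    try dsimp only
    have : (Arrow.homMk _ _ (R.norm.naturality (𝟙 X)) :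
        Arrow.mk (R.norm.app X) ⟶ Arrow.mk (R.norm.app X)) = 𝟙 (Arrow.mk (R.norm.app X)) := by
      ext <;> simp
    rw [this, image.map_id]
    rfl
  map_comp {X Y Z} f g := by
    try dsimp only
    rw [← image.map_comp]
    congr 1
    ext <;> simp

end Recollement

namespace CategoryTheory.Adjunction

variable {C D : Type*} [Category C] [Category D] [HasZeroMorphisms C] [HasZeroMorphisms D]
  {F : C ⥤ D} {G : D ⥤ C}

lemma isZero_obj_of_unit_app_eq_zero [F.PreservesZeroMorphisms] (adj : F ⊣ G) {X : C}
    (h : adj.unit.app X = 0) : IsZero (F.obj X) := by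
  rw [IsZero.iff_id_eq_zero, ← adj.left_triangle_components X, h, F.map_zero, zero_comp]

lemma isZero_obj_of_counit_app_eq_zero [G.PreservesZeroMorphisms] (adj : F ⊣ G) {Y : D}
    (h : adj.counit.app Y = 0) : IsZero (G.obj Y) := by
  rw [IsZero.iff_id_eq_zero, ← adj.right_triangle_components Y, h, G.map_zero, comp_zero]

end CategoryTheory.Adjunction

namespace CategoryTheory.Functor

variable {C D : Type*} [Category C] [Category D] [HasZeroMorphisms D] (F : C ⥤ D)
  {X Y : C} (f : X ⟶ Y) [HasImage f]

lemma isZero_obj_image_of_isZero_obj_source [F.PreservesEpimorphisms] [Epi (factorThruImage f)]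
    (h : IsZero (F.obj X)) : IsZero (F.obj (image f)) :=
  h.of_epi (F.map (factorThruImage f))

lemma isZero_obj_image_of_isZero_obj_target [F.PreservesMonomorphisms]
    (h : IsZero (F.obj Y)) : IsZero (F.obj (image f)) :=
  h.of_mono (F.map (image.ι f))

end CategoryTheory.Functor

namespace Recollement

variable (R : Recollement A' A A'')

lemma isZero_jStar_obj_iLower_obj (Y : A') : IsZero (R.jStar.obj (R.iLower.obj Y)) :=
  (R.essImage_iLower _).1 (R.iLower.obj_mem_essImage Y)

lemma hom_jShriek_obj_iLower_obj_eq_zero {X : A''} {Y : A'}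
    (f : R.jShriek.obj X ⟶ R.iLower.obj Y) : f = 0 :=
  (R.adj₁.homEquiv _ _).injective ((R.isZero_jStar_obj_iLower_obj Y).eq_of_tgt _ _)

lemma hom_iLower_obj_jLower_obj_eq_zero {X : A''} {Y : A'}
    (f : R.iLower.obj Y ⟶ R.jLower.obj X) : f = 0 :=
  (R.adj₂.homEquiv _ _).symm.injective ((R.isZero_jStar_obj_iLower_obj Y).eq_of_src _ _)

lemma isZero_iStar_obj_jShriek_obj (X : A'') : IsZero (R.iStar.obj (R.jShriek.obj X)) :=
  R.adj₃.isZero_obj_of_unit_app_eq_zero (R.hom_jShriek_obj_iLower_obj_eq_zero _)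

lemma isZero_iShriek_obj_jLower_obj (X : A'') : IsZero (R.iShriek.obj (R.jLower.obj X)) :=
  R.adj₄.isZero_obj_of_counit_app_eq_zero (R.hom_iLower_obj_jLower_obj_eq_zero _)

end Recollement

/-- The intermediate extension `j_!* = Im (N : j_! → j_*)` satisfies
`i^* ∘ j_!* = 0` and `i^! ∘ j_!* = 0`. -/
theorem recollement_iStar_jMid_isZero_and_iShriek_jMid_isZero
    (R : Recollement A' A A'') (X : A'') :
    IsZero (R.iStar.obj (R.jMid.obj X)) ∧ IsZero (R.iShriek.obj (R.jMid.obj X)) := by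
  have : R.iStar.PreservesEpimorphisms := Functor.preservesEpimorphisms_of_adjunction R.adj₃
  have : R.iShriek.PreservesMonomorphisms := Functor.preservesMonomorphisms_of_adjunction R.adj₄
  exact ⟨R.iStar.isZero_obj_image_of_isZero_obj_source _ (R.isZero_iStar_obj_jShriek_obj X),
    R.iShriek.isZero_obj_image_of_isZero_obj_target _ (R.isZero_iShriek_obj_jLower_obj X)⟩
end

section
/- In a recollement situation, let A, B be objects of A with i*A = 0, i^!B = 0, j*A ≠ 0, j*B ≠ 0. Then the map Ext¹_A(A, B) → Ext¹_{A''}(j*A, j*B) induced by the exact functor j* is a monomorphism. -/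
open CategoryTheory Limits

universe v u v' u' v'' u''

variable {A' : Type u'} {A : Type u} {A'' : Type u''}
    [Category.{v'} A'] [Category.{v} A] [Category.{v''} A'']
    [Abelian A'] [Abelian A] [Abelian A'']

/-!
Since `i^* X = 0`, the counit `j_! j^* X ⟶ X` is an epimorphism, so every extension `E` of `X`
by `B` is a quotient of `j_! j^* E ⊞ B`. The isomorphism `ψ` and `i'` give a morphism
`j_! j^* E ⊞ B ⟶ E'` which after applying `j^*` is the quotient map followed by `ψ`.
On the kernel of the quotient map it therefore factors through `B` by a morphism killed by
`j^*`, and such a morphism vanishes because `i^! B = 0`. So it descends to a morphism of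
extensions `E ⟶ E'`, which is an isomorphism by the five lemma.
-/

open CategoryTheory.Category

lemma epi_biprod_desc_of_epi_comp {C : Type*} [Category C] [Abelian C] {S : ShortComplex C}
    (hS : S.Exact) [Epi S.g] {Y : C} (a : Y ⟶ S.X₂) [Epi (a ≫ S.g)] :
    Epi (biprod.desc a S.f) := by
  rw [Preadditive.epi_iff_cancel_zero]
  intro T c hc
  have hfc : S.f ≫ c = 0 := by simpa using biprod.inr ≫= hc
  have hc' : hS.desc c hfc = 0 := by
    rw [← cancel_epi (a ≫ S.g), assoc, hS.g_desc, comp_zero]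
    simpa using biprod.inl ≫= hc
  rw [← hS.g_desc c hfc, hc', comp_zero]

namespace Recollement

variable (R : Recollement A' A A'')

instance jStar_preservesMonomorphisms : R.jStar.PreservesMonomorphisms :=
  Functor.preservesMonomorphisms_of_adjunction R.adj₁

instance jStar_preservesEpimorphisms : R.jStar.PreservesEpimorphisms :=
  Functor.preservesEpimorphisms_of_adjunction R.adj₂

instance jShriek_preservesEpimorphisms : R.jShriek.PreservesEpimorphisms :=
  Functor.preservesEpimorphisms_of_adjunction R.adj₁

lemma hom_eq_zero_of_isZero_jStar_of_isZero_iShriek {M N : A} (hM : IsZero (R.jStar.obj M))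
    (hN : IsZero (R.iShriek.obj N)) (f : M ⟶ N) : f = 0 := by
  obtain ⟨W, ⟨e⟩⟩ := (R.essImage_iLower M).2 hM
  have : e.hom ≫ f = 0 := by
    rw [← (R.adj₄.homEquiv W N).symm_apply_apply (e.hom ≫ f), Adjunction.homEquiv_counit,
      hN.eq_of_tgt (R.adj₄.homEquiv W N _) 0, Functor.map_zero, zero_comp]
  simpa using e.inv ≫= this

lemma hom_eq_zero_of_isZero_iStar_of_isZero_jStar {M N : A} (hM : IsZero (R.iStar.obj M))
    (hN : IsZero (R.jStar.obj N)) (f : M ⟶ N) : f = 0 := by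
  obtain ⟨W, ⟨e⟩⟩ := (R.essImage_iLower N).2 hN
  have : f ≫ e.inv = 0 := by
    rw [← (R.adj₃.homEquiv M W).apply_symm_apply (f ≫ e.inv), Adjunction.homEquiv_unit,
      hM.eq_of_src ((R.adj₃.homEquiv M W).symm _) 0, Functor.map_zero, comp_zero]
  simpa using this =≫ e.hom

lemma eq_zero_of_jStar_map_eq_zero_of_isZero_iShriek {M N : A} (hN : IsZero (R.iShriek.obj N))
    (f : M ⟶ N) (hf : R.jStar.map f = 0) : f = 0 := by
  have hι : R.jStar.map (image.ι f) = 0 := by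
    rw [← cancel_epi (R.jStar.map (factorThruImage f)), ← Functor.map_comp, image.fac, hf,
      comp_zero]
  rw [← image.fac f, R.hom_eq_zero_of_isZero_jStar_of_isZero_iShriek
    (IsZero.of_mono_eq_zero _ hι) hN (image.ι f), comp_zero]

lemma eq_zero_of_jStar_map_eq_zero_of_isZero_iStar {M N : A} (hM : IsZero (R.iStar.obj M))
    (f : M ⟶ N) (hf : R.jStar.map f = 0) : f = 0 := by
  have hπ : R.jStar.map (factorThruImage f) = 0 := by
    rw [← cancel_mono (R.jStar.map (image.ι f)), ← Functor.map_comp, image.fac, hf, zero_comp]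
  rw [← image.fac f, R.hom_eq_zero_of_isZero_iStar_of_isZero_jStar hM
    (IsZero.of_epi_eq_zero _ hπ) (factorThruImage f), zero_comp]

lemma jStar_map_counit_app (Y : A) :
    R.jStar.map (R.adj₁.counit.app Y) = inv (R.adj₁.unit.app (R.jStar.obj Y)) :=
  IsIso.eq_inv_of_hom_inv_id (R.adj₁.right_triangle_components Y)

instance isIso_jStar_map_counit_app (Y : A) : IsIso (R.jStar.map (R.adj₁.counit.app Y)) := by
  rw [jStar_map_counit_app]
  infer_instance

lemma jStar_map_jShriek_map_comp_counit_app {Y Y' : A}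
    (φ : R.jStar.obj Y ⟶ R.jStar.obj Y') :
    R.jStar.map (R.jShriek.map φ ≫ R.adj₁.counit.app Y') =
      R.jStar.map (R.adj₁.counit.app Y) ≫ φ := by
  rw [Functor.map_comp, jStar_map_counit_app, jStar_map_counit_app, IsIso.comp_inv_eq, assoc,
    IsIso.eq_inv_comp]
  exact R.adj₁.unit_naturality φ

lemma epi_counit_app_of_isZero_iStar {Y : A} (hY : IsZero (R.iStar.obj Y)) :
    Epi (R.adj₁.counit.app Y) := by
  refine Abelian.epi_of_cokernel_π_eq_zero _
    (R.eq_zero_of_jStar_map_eq_zero_of_isZero_iStar hY _ ?_)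
  rw [← cancel_epi (R.jStar.map (R.adj₁.counit.app Y)), ← Functor.map_comp, cokernel.condition,
    Functor.map_zero, comp_zero]

lemma eq_zero_of_comp_eq_zero_of_jStar_map_eq_zero {B E X K : A} (hB : IsZero (R.iShriek.obj B))
    {i : B ⟶ E} {p : E ⟶ X} {w : i ≫ p = 0} (hE : (ShortComplex.mk i p w).Exact) [Mono i]
    (f : K ⟶ E) (hfp : f ≫ p = 0) (hf : R.jStar.map f = 0) : f = 0 := by
  rw [← hE.lift_f f hfp, R.eq_zero_of_jStar_map_eq_zero_of_isZero_iShriek hB (hE.lift f hfp) ?_,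
    zero_comp]
  rw [← cancel_mono (R.jStar.map i), ← Functor.map_comp, hE.lift_f, hf, zero_comp]

lemma epi_counit_app_comp {E X : A} (hX : IsZero (R.iStar.obj X)) (p : E ⟶ X) [Epi p] :
    Epi (R.adj₁.counit.app E ≫ p) := by
  have := R.epi_counit_app_of_isZero_iStar hX
  rw [← R.adj₁.counit_naturality p]
  infer_instance

lemma exists_extension_hom_of_jStar {X B E E' : A} (hX : IsZero (R.iStar.obj X))
    (hB : IsZero (R.iShriek.obj B)) {i : B ⟶ E} {p : E ⟶ X} {i' : B ⟶ E'} {p' : E' ⟶ X}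
    {w : i ≫ p = 0} {w' : i' ≫ p' = 0} (hE : (ShortComplex.mk i p w).Exact) [Epi p]
    (hE' : (ShortComplex.mk i' p' w').Exact) [Mono i'] (φ : R.jStar.obj E ⟶ R.jStar.obj E')
    (h₁ : R.jStar.map i ≫ φ = R.jStar.map i') (h₂ : φ ≫ R.jStar.map p' = R.jStar.map p) :
    ∃ f : E ⟶ E', i ≫ f = i' ∧ f ≫ p' = p := by
  let e : R.jShriek.obj (R.jStar.obj E) ⊞ B ⟶ E := biprod.desc (R.adj₁.counit.app E) i
  let g : R.jShriek.obj (R.jStar.obj E) ⊞ B ⟶ E' :=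
    biprod.desc (R.jShriek.map φ ≫ R.adj₁.counit.app E') i'
  have := R.epi_counit_app_comp hX p
  have : Epi e := epi_biprod_desc_of_epi_comp hE _
  have hgp : g ≫ p' = e ≫ p := by
    ext
    · simp only [e, g, biprod.inl_desc_assoc, assoc]
      rw [← R.adj₁.counit_naturality p', ← Functor.map_comp_assoc, h₂,
        R.adj₁.counit_naturality]
    · simp [e, g, w, w']
  have hjg : R.jStar.map g = R.jStar.map e ≫ φ := by
    have := preservesBinaryBiproducts_of_preservesBiproducts R.jStar
    rw [← cancel_epi (R.jStar.mapBiprod (R.jShriek.obj (R.jStar.obj E)) B).inv]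
    rw [biprod.mapBiprod_inv_map_desc, ← assoc, biprod.mapBiprod_inv_map_desc]
    ext
    · simpa using R.jStar_map_jShriek_map_comp_counit_app φ
    · simp [h₁]
  have hker : kernel.ι e ≫ g = 0 := by
    refine R.eq_zero_of_comp_eq_zero_of_jStar_map_eq_zero hB hE' _ ?_ ?_
    · rw [assoc, hgp, kernel.condition_assoc, zero_comp]
    · rw [Functor.map_comp, hjg, ← Functor.map_comp_assoc, kernel.condition, Functor.map_zero,
        zero_comp]
  refine ⟨Abelian.epiDesc e g hker, ?_, ?_⟩
  · have h := biprod.inr ≫= Abelian.comp_epiDesc e g hker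
    rwa [biprod.inr_desc_assoc, biprod.inr_desc] at h
  · rw [← cancel_epi e, ← assoc, Abelian.comp_epiDesc, hgp]

end Recollement

theorem recollement_jStar_ext_one_mono_general (R : Recollement A' A A'')
    (X B : A) (hX : IsZero (R.iStar.obj X)) (hB : IsZero (R.iShriek.obj B))
    (E E' : A) (i : B ⟶ E) (p : E ⟶ X) (i' : B ⟶ E') (p' : E' ⟶ X)
    (w : i ≫ p = 0) (w' : i' ≫ p' = 0)
    (hE : (ShortComplex.mk i p w).ShortExact)
    (hE' : (ShortComplex.mk i' p' w').ShortExact)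
    (ψ : R.jStar.obj E ≅ R.jStar.obj E')
    (hψ₁ : R.jStar.map i ≫ ψ.hom = R.jStar.map i')
    (hψ₂ : ψ.hom ≫ R.jStar.map p' = R.jStar.map p) :
    ∃ φ : E ≅ E', i ≫ φ.hom = i' ∧ φ.hom ≫ p' = p := by
  have := hE.epi_g
  have := hE'.mono_f
  obtain ⟨f, hif, hfp⟩ :=
    R.exists_extension_hom_of_jStar hX hB hE.exact hE'.exact ψ.hom hψ₁ hψ₂
  let φ := ShortComplex.homMk (S₁ := .mk i p w) (S₂ := .mk i' p' w') (𝟙 B) f (𝟙 X)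
    (by simp [hif]) (by simp [hfp])
  have : IsIso φ.τ₂ := ShortComplex.isIso₂_of_shortExact_of_isIso₁₃' φ hE hE'
    (IsIso.id B) (IsIso.id X)
  exact ⟨asIso φ.τ₂, hif, hfp⟩

/-- If `i^*A = 0`, `i^!B = 0`, `j^*A ≠ 0` and `j^*B ≠ 0`, then `j^*` is injective
on `Ext¹`: two extensions of `A` by `B` whose images under the exact functor `j^*`
are equivalent are already equivalent. -/
theorem recollement_jStar_ext_one_mono (R : Recollement A' A A'')
    (X B : A) (hX : IsZero (R.iStar.obj X)) (hB : IsZero (R.iShriek.obj B))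
    (hX' : ¬ IsZero (R.jStar.obj X)) (hB' : ¬ IsZero (R.jStar.obj B))
    (E E' : A) (i : B ⟶ E) (p : E ⟶ X) (i' : B ⟶ E') (p' : E' ⟶ X)
    (w : i ≫ p = 0) (w' : i' ≫ p' = 0)
    (hE : (ShortComplex.mk i p w).ShortExact)
    (hE' : (ShortComplex.mk i' p' w').ShortExact)
    (ψ : R.jStar.obj E ≅ R.jStar.obj E')
    (hψ₁ : R.jStar.map i ≫ ψ.hom = R.jStar.map i')
    (hψ₂ : ψ.hom ≫ R.jStar.map p' = R.jStar.map p) :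
    ∃ φ : E ≅ E', i ≫ φ.hom = i' ∧ φ.hom ≫ p' = p :=
  recollement_jStar_ext_one_mono_general R X B hX hB E E' i p i' p' w w' hE hE' ψ hψ₁ hψ₂
end
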